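/- For a p-biased random walk with p > 1/2, P(T ≥ t) ≤ 2√p(√p + √q)(4pq)^{t/2} for every nonnegative integer t, where T is the last time the walk visits its bottommost point and q = 1-p. -/

import Mathlib

/-!
On the event `t ≤ T` the walk comes back, after time `t`, to a level at most `min 0 S_t`: it
drops by `max S_t 0` below its position at time `t`. By gambler's ruin, a walk started afresh
drops by `m` with probability at most `(q/p)^m`, and this is independent of the first `t`
steps. A path of `t` steps with `U` up-steps and `W` down-steps has weight `p^U q^W`, and
`p^U q^W (q/p)^(U-W)⁺ ≤ (pq)^(t/2)` because `q ≤ p`; summing over the `2^t` paths gives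
`(2√(pq))^t = (4pq)^(t/2)`.
-/

open MeasureTheory ProbabilityTheory

namespace BiasedWalk

open Finset

def boolStep (b : Bool) : ℤ := if b then 1 else -1

def pathSteps {n : ℕ} (v : Fin n → Bool) (i : ℕ) : ℤ :=
  if h : i < n then boolStep (v ⟨i, h⟩) else 0

def walk (z : ℕ → ℤ) (s : ℕ) : ℤ := ∑ i ∈ range s, z i

def pathWeight (p q : ℝ) {n : ℕ} (v : Fin n → Bool) : ℝ := ∏ i, if v i then p else q

open Classical in
/-- The probability that the first `n` steps satisfy `P`, as a finite sum over Boolean paths.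
Steps after time `n` are set to `0`, so this is only meaningful when `P` depends on the first
`n` steps alone. -/
noncomputable def pathProb (p q : ℝ) (n : ℕ) (P : (ℕ → ℤ) → Prop) : ℝ :=
  ∑ v : Fin n → Bool with P (pathSteps v), pathWeight p q v

def ReachesWithin (R : ℕ) (a : ℤ) (z : ℕ → ℤ) : Prop := ∃ r ≤ R, walk z r ≤ a

def DropsWithin (t R : ℕ) (z : ℕ → ℤ) : Prop := ∃ r ≤ R, walk z (t + r) ≤ min 0 (walk z t)

lemma walk_congr {z z' : ℕ → ℤ} {s : ℕ} (h : ∀ i < s, z i = z' i) : walk z s = walk z' s :=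
  sum_congr rfl fun i hi => h i (mem_range.mp hi)

lemma walk_pathSteps_append {t R : ℕ} (a : Fin t → Bool) (b : Fin R → Bool) (r : ℕ) :
    walk (pathSteps (Fin.append a b)) (t + r) = walk (pathSteps a) t + walk (pathSteps b) r := by
  rw [walk, sum_range_add]
  congr 1
  · refine sum_congr rfl fun i hi => ?_
    have hi : i < t := mem_range.mp hi
    simp only [pathSteps, hi, Nat.lt_add_right R hi, dif_pos]
    exact congrArg boolStep (Fin.append_left a b ⟨i, hi⟩)
  · refine sum_congr rfl fun j _ => ?_
    by_cases hj : j < R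
    · simp only [pathSteps, hj, Nat.add_lt_add_left hj t, dif_pos]
      exact congrArg boolStep (Fin.append_right a b ⟨j, hj⟩)
    · simp [pathSteps, hj]

variable {p q : ℝ}

lemma pathWeight_nonneg (hp : 0 ≤ p) (hq : 0 ≤ q) {n : ℕ} (v : Fin n → Bool) :
    0 ≤ pathWeight p q v :=
  prod_nonneg fun i _ => by split <;> assumption

lemma pathWeight_append {t R : ℕ} (a : Fin t → Bool) (b : Fin R → Bool) :
    pathWeight p q (Fin.append a b) = pathWeight p q a * pathWeight p q b := by
  simp [pathWeight, Fin.prod_univ_add]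

lemma sum_pathWeight (n : ℕ) : ∑ v : Fin n → Bool, pathWeight p q v = (p + q) ^ n := by
  simp only [pathWeight]
  rw [← (Fintype.prod_sum fun (_ : Fin n) (b : Bool) => if b then p else q)]
  simp

lemma pathProb_le_one (hp : 0 ≤ p) (hq : 0 ≤ q) (hpq : p + q = 1) (n : ℕ)
    (P : (ℕ → ℤ) → Prop) : pathProb p q n P ≤ 1 := by
  classical
  calc pathProb p q n P ≤ ∑ v : Fin n → Bool, pathWeight p q v :=
        sum_le_sum_of_subset_of_nonneg (filter_subset _ _)
          fun v _ _ => pathWeight_nonneg hp hq v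
    _ = 1 := by rw [sum_pathWeight, hpq, one_pow]

lemma pathProb_eq_zero {n : ℕ} {P : (ℕ → ℤ) → Prop} (hP : ∀ z, ¬ P z) :
    pathProb p q n P = 0 := by
  classical
  exact sum_eq_zero fun v hv => absurd (mem_filter.mp hv).2 (hP _)

lemma pathProb_add {t R : ℕ} {P : (ℕ → ℤ) → Prop} (Q : (Fin t → Bool) → (ℕ → ℤ) → Prop)
    (hPQ : ∀ a (b : Fin R → Bool), P (pathSteps (Fin.append a b)) ↔ Q a (pathSteps b)) :
    pathProb p q (t + R) P = ∑ a, pathWeight p q a * pathProb p q R (Q a) := by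
  classical
  simp only [pathProb, sum_filter, mul_sum]
  rw [← (Fin.appendEquiv t R).sum_comp, Fintype.sum_prod_type]
  refine sum_congr rfl fun a _ => sum_congr rfl fun b _ => ?_
  show (if P (pathSteps (Fin.append a b)) then pathWeight p q (Fin.append a b) else 0) = _
  simp only [hPQ, pathWeight_append, mul_ite, mul_zero]

lemma pathProb_one_add {R : ℕ} {P : (ℕ → ℤ) → Prop} (Q : Bool → (ℕ → ℤ) → Prop)
    (hPQ : ∀ (a : Fin 1 → Bool) (b : Fin R → Bool),
      P (pathSteps (Fin.append a b)) ↔ Q (a 0) (pathSteps b)) :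
    pathProb p q (1 + R) P = p * pathProb p q R (Q true) + q * pathProb p q R (Q false) := by
  rw [pathProb_add (fun a => Q (a 0)) hPQ, ← (Equiv.funUnique (Fin 1) Bool).symm.sum_comp]
  simp [pathWeight]

lemma reachesWithin_zero_iff {a : ℤ} {z : ℕ → ℤ} : ReachesWithin 0 a z ↔ 0 ≤ a := by
  simp [ReachesWithin, walk]

lemma pathProb_reachesWithin_succ {R : ℕ} {a : ℤ} (ha : a < 0) :
    pathProb p q (R + 1) (ReachesWithin (R + 1) a) =
      p * pathProb p q R (ReachesWithin R (a - 1)) +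
        q * pathProb p q R (ReachesWithin R (a + 1)) := by
  rw [add_comm R 1]
  refine pathProb_one_add (fun c => ReachesWithin R (a - boolStep c)) fun c b => ?_
  have hc : walk (pathSteps c) 1 = boolStep (c 0) := by simp [walk, pathSteps]
  constructor
  · rintro ⟨r, hr, hra⟩
    obtain ⟨r, rfl⟩ : ∃ r', r = 1 + r' := by
      rcases r with _ | r
      · simp [walk] at hra; omega
      · exact ⟨r, by omega⟩
    refine ⟨r, by omega, ?_⟩
    rw [walk_pathSteps_append, hc] at hra
    omega
  · rintro ⟨r, hr, hra⟩
    refine ⟨1 + r, by omega, ?_⟩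
    rw [walk_pathSteps_append, hc]
    omega

theorem pow_mul_pathProb_reachesWithin_le (hp : 0 ≤ p) (hq : 0 ≤ q) (hpq : p + q = 1)
    (R m : ℕ) : p ^ m * pathProb p q R (ReachesWithin R (-m)) ≤ q ^ m := by
  induction R generalizing m with
  | zero =>
    rcases m with _ | m
    · simpa using pathProb_le_one hp hq hpq 0 _
    · have hnever (z : ℕ → ℤ) : ¬ ReachesWithin 0 (-((m + 1 : ℕ) : ℤ)) z := by
        rw [reachesWithin_zero_iff]; omega
      rw [pathProb_eq_zero hnever, mul_zero]
      positivity
  | succ R ih =>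
    rcases m with _ | m
    · simpa using pathProb_le_one hp hq hpq _ _
    have hlow : -((m + 1 : ℕ) : ℤ) - 1 = -((m + 2 : ℕ) : ℤ) := by push_cast; ring
    have hhigh : -((m + 1 : ℕ) : ℤ) + 1 = -(m : ℤ) := by push_cast; ring
    rw [pathProb_reachesWithin_succ (by omega), hlow, hhigh]
    calc p ^ (m + 1) * (p * pathProb p q R (ReachesWithin R (-((m + 2 : ℕ) : ℤ))) +
          q * pathProb p q R (ReachesWithin R (-m)))
        = p ^ (m + 2) * pathProb p q R (ReachesWithin R (-((m + 2 : ℕ) : ℤ))) +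
          q * p * (p ^ m * pathProb p q R (ReachesWithin R (-m))) := by ring
      _ ≤ q ^ (m + 2) + q * p * q ^ m := by gcongr <;> apply ih
      _ = q ^ (m + 1) * (q + p) := by ring
      _ = q ^ (m + 1) := by rw [add_comm q, hpq, mul_one]

lemma pathWeight_eq_pow_mul_pow {t : ℕ} (a : Fin t → Bool) :
    pathWeight p q a = p ^ #{i | a i} * q ^ #{i | ¬ a i} := by
  simp [pathWeight, prod_ite]

lemma walk_pathSteps_eq_card_sub_card {t : ℕ} (a : Fin t → Bool) :
    walk (pathSteps a) t = #{i | a i} - #{i | ¬ a i} := by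
  rw [walk, ← Fin.sum_univ_eq_sum_range]
  simp [pathSteps, boolStep, sum_ite, sub_eq_add_neg]

lemma pow_mul_pow_le_sqrt_mul_pow (hq : 0 ≤ q) (hqp : q ≤ p) {k l : ℕ} (hkl : k ≤ l) :
    p ^ k * q ^ l ≤ √(p * q) ^ (k + l) := by
  obtain ⟨d, rfl⟩ := Nat.exists_eq_add_of_le hkl
  have hp : 0 ≤ p := hq.trans hqp
  have hq_le : q ≤ √(p * q) := Real.le_sqrt_of_sq_le (by nlinarith)
  calc p ^ k * q ^ (k + d) = (p * q) ^ k * q ^ d := by ring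
    _ ≤ (√(p * q) ^ 2) ^ k * √(p * q) ^ d := by
        rw [Real.sq_sqrt (by positivity)]; gcongr
    _ = √(p * q) ^ (k + (k + d)) := by ring

lemma pathWeight_mul_le (hq : 0 ≤ q) (hqp : q ≤ p) {t : ℕ} (a : Fin t → Bool) {r : ℝ}
    (hr : p ^ (walk (pathSteps a) t).toNat * r ≤ q ^ (walk (pathSteps a) t).toNat) :
    pathWeight p q a * r ≤ √(p * q) ^ t := by
  have hcard : #{i | a i} + #{i | ¬ a i} = t := by
    simpa using card_filter_add_card_filter_not (s := univ) (fun i => a i)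
  rw [walk_pathSteps_eq_card_sub_card] at hr
  rw [pathWeight_eq_pow_mul_pow]
  generalize #{i | a i} = U, #{i | ¬ a i} = W at hr hcard ⊢
  subst hcard
  have hp : 0 ≤ p := hq.trans hqp
  have hq_pow : 0 ≤ q ^ W := by positivity
  rw [show ((U : ℤ) - W).toNat = U - W by omega] at hr
  rcases le_total W U with hWU | hUW
  · obtain ⟨d, rfl⟩ := Nat.exists_eq_add_of_le hWU
    rw [Nat.add_sub_cancel_left] at hr
    calc p ^ (W + d) * q ^ W * r = (p * q) ^ W * (p ^ d * r) := by ring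
      _ ≤ (p * q) ^ W * q ^ d := by gcongr
      _ = p ^ W * q ^ (W + d) := by ring
      _ ≤ √(p * q) ^ (W + d + W) := by
        rw [add_comm (W + d)]; exact pow_mul_pow_le_sqrt_mul_pow hq hqp (by omega)
  · rw [Nat.sub_eq_zero_of_le hUW, pow_zero, pow_zero, one_mul] at hr
    calc p ^ U * q ^ W * r ≤ p ^ U * q ^ W := mul_le_of_le_one_right (by positivity) hr
      _ ≤ √(p * q) ^ (U + W) := pow_mul_pow_le_sqrt_mul_pow hq hqp hUW

lemma dropsWithin_append_iff {t R : ℕ} (a : Fin t → Bool) (b : Fin R → Bool) :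
    DropsWithin t R (pathSteps (Fin.append a b)) ↔
      ReachesWithin R (-(walk (pathSteps a) t).toNat) (pathSteps b) := by
  have ht : walk (pathSteps (Fin.append a b)) t = walk (pathSteps a) t := by
    simpa [walk] using walk_pathSteps_append a b 0
  simp only [DropsWithin, ReachesWithin, walk_pathSteps_append, ht]
  exact exists_congr fun r => and_congr_right fun _ => by omega

theorem pathProb_dropsWithin_le (hq : 0 ≤ q) (hqp : q ≤ p) (hpq : p + q = 1) (t R : ℕ) :
    pathProb p q (t + R) (DropsWithin t R) ≤ (2 * √(p * q)) ^ t := by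
  have hp : 0 ≤ p := hq.trans hqp
  rw [pathProb_add _ dropsWithin_append_iff]
  calc _ ≤ ∑ _a : Fin t → Bool, √(p * q) ^ t := sum_le_sum fun a _ =>
        pathWeight_mul_le hq hqp a (pow_mul_pathProb_reachesWithin_le hp hq hpq R _)
    _ = (2 * √(p * q)) ^ t := by simp [mul_pow]

lemma dropsWithin_mono {t : ℕ} {z : ℕ → ℤ} : Monotone fun R => DropsWithin t R z :=
  fun _ _ hR ⟨r, hr, h⟩ => ⟨r, hr.trans hR, h⟩

lemma dropsWithin_congr {t R : ℕ} {z z' : ℕ → ℤ} (h : ∀ i < t + R, z i = z' i) :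
    DropsWithin t R z → DropsWithin t R z' := by
  rintro ⟨r, hr, hz⟩
  refine ⟨r, hr, ?_⟩
  rwa [← walk_congr fun i hi => h i (by omega), ← walk_congr fun i hi => h i (by omega)]

section Measure

variable {Ω : Type*} [MeasurableSpace Ω] {μ : Measure Ω} {Z : ℕ → Ω → ℤ}
  (hup : ∀ i, μ {ω | Z i ω = 1} = ENNReal.ofReal p)
  (hdown : ∀ i, μ {ω | Z i ω = -1} = ENNReal.ofReal q)
include hup hdown

lemma ae_eq_one_or_eq_neg_one [IsProbabilityMeasure μ] (hmeas : ∀ i, Measurable (Z i))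
    (hp : 0 ≤ p) (hq : 0 ≤ q) (hpq : p + q = 1) : ∀ᵐ ω ∂μ, ∀ i, Z i ω = 1 ∨ Z i ω = -1 := by
  refine ae_all_iff.mpr fun i => ?_
  have hup_meas : MeasurableSet {ω | Z i ω = 1} := hmeas i (measurableSet_singleton 1)
  have hdown_meas : MeasurableSet {ω | Z i ω = -1} := hmeas i (measurableSet_singleton (-1))
  have hdisj : Disjoint {ω | Z i ω = 1} {ω | Z i ω = -1} :=
    Set.disjoint_left.mpr fun ω h1 h2 => by simp_all
  refine (prob_compl_eq_zero_iff (hup_meas.union hdown_meas)).mpr ?_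
  rw [measure_union hdisj hdown_meas, hup, hdown, ← ENNReal.ofReal_add hp hq, hpq,
    ENNReal.ofReal_one]

lemma measure_cylinder (hindep : iIndepFun Z μ) (hp : 0 ≤ p) (hq : 0 ≤ q) {n : ℕ}
    (v : Fin n → Bool) :
    μ {ω | ∀ i < n, Z i ω = pathSteps v i} = ENNReal.ofReal (pathWeight p q v) := by
  have hcyl : {ω | ∀ i < n, Z i ω = pathSteps v i} = ⋂ i ∈ range n, Z i ⁻¹' {pathSteps v i} := by
    ext; simp
  rw [hcyl, hindep.meas_biInter fun i _ => ⟨{pathSteps v i}, measurableSet_singleton _, rfl⟩,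
    pathWeight, ENNReal.ofReal_prod_of_nonneg fun i _ => by split <;> assumption,
    ← Fin.prod_univ_eq_prod_range]
  refine prod_congr rfl fun i _ => ?_
  simp only [pathSteps, i.2, dif_pos]
  cases v i
  · exact hdown i
  · exact hup i

theorem measure_le_pathProb [IsProbabilityMeasure μ] (hmeas : ∀ i, Measurable (Z i))
    (hindep : iIndepFun Z μ) (hp : 0 ≤ p) (hq : 0 ≤ q) (hpq : p + q = 1) {n : ℕ}
    {P : (ℕ → ℤ) → Prop} (hP : ∀ z z', (∀ i < n, z i = z' i) → P z → P z') :
    μ {ω | P (Z · ω)} ≤ ENNReal.ofReal (pathProb p q n P) := by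
  classical
  calc μ {ω | P (Z · ω)}
      ≤ μ (⋃ v ∈ univ.filter fun v : Fin n → Bool => P (pathSteps v),
          {ω | ∀ i < n, Z i ω = pathSteps v i}) := by
        refine measure_mono_ae ?_
        filter_upwards [ae_eq_one_or_eq_neg_one hup hdown hmeas hp hq hpq] with ω hω hPω
        set v : Fin n → Bool := fun i => Z i ω = 1
        have hv : ∀ i < n, Z i ω = pathSteps v i := fun i hi => by
          rcases hω i with h | h <;> simp [v, pathSteps, boolStep, hi, h]
        exact Set.mem_iUnion₂.mpr ⟨v, mem_filter.mpr ⟨mem_univ _, hP _ _ hv hPω⟩, hv⟩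
    _ ≤ ∑ v ∈ univ.filter fun v : Fin n → Bool => P (pathSteps v),
          μ {ω | ∀ i < n, Z i ω = pathSteps v i} := measure_biUnion_finset_le _ _
    _ = ENNReal.ofReal (pathProb p q n P) := by
        rw [pathProb, ENNReal.ofReal_sum_of_nonneg fun v _ => pathWeight_nonneg hp hq v]
        exact sum_congr rfl fun v _ => measure_cylinder hup hdown hindep hp hq v

end Measure

/-- When `f` is unbounded below, `sInf` is a junk value, but then some late `f s` lies below
`f 0, …, f t` anyway. -/
lemma exists_ge_forall_le_of_le_sSup {f : ℕ → ℤ} {t : ℕ}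
    (ht : t ≤ sSup {s | f s = sInf (Set.range f)}) : ∃ s ≥ t, ∀ u ≤ t, f s ≤ f u := by
  by_cases hbdd : BddBelow (Set.range f)
  · set A := {s | f s = sInf (Set.range f)}
    by_cases hA : A.Nonempty ∧ BddAbove A
    · exact ⟨sSup A, ht, fun u _ => (Nat.sSup_mem hA.1 hA.2).trans_le (csInf_le hbdd ⟨u, rfl⟩)⟩
    · have hA0 : sSup A = 0 := by
        rcases not_and_or.mp hA with h | h
        · rw [Set.not_nonempty_iff_eq_empty.mp h, csSup_empty, bot_eq_zero]
        · rw [csSup_of_not_bddAbove h, csSup_empty, bot_eq_zero]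
      exact ⟨t, le_rfl, fun u hu => by rw [show u = t by omega]⟩
  · obtain ⟨_, ⟨s, rfl⟩, hs⟩ :=
      not_bddBelow_iff.mp hbdd ((range (t + 1)).inf' nonempty_range_add_one f)
    have hlt : ∀ u ≤ t, f s < f u := fun u hu =>
      hs.trans_le (inf'_le _ (mem_range.mpr (by omega)))
    exact ⟨s, not_lt.mp fun hst => (hlt s hst.le).false, fun u hu => (hlt u hu).le⟩

lemma two_sqrt_mul_pow_le (hp : 1 / 2 < p) (hq : 0 ≤ q) (t : ℕ) :
    (2 * √(p * q)) ^ t ≤ 2 * √p * (√p + √q) * (4 * p * q) ^ ((t : ℝ) / 2) := by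
  have hpow : (4 * p * q) ^ ((t : ℝ) / 2) = (2 * √(p * q)) ^ t := by
    rw [show (t : ℝ) / 2 = 1 / 2 * t by ring, Real.rpow_mul (by positivity), ← Real.sqrt_eq_rpow,
      Real.rpow_natCast, show 4 * p * q = 2 ^ 2 * (p * q) by ring, Real.sqrt_mul (by positivity),
      Real.sqrt_sq zero_le_two]
  have hC : 1 ≤ 2 * √p * (√p + √q) := by
    nlinarith [Real.mul_self_sqrt (by linarith : 0 ≤ p), Real.sqrt_nonneg p, Real.sqrt_nonneg q]
  rw [hpow]
  exact le_mul_of_one_le_left (by positivity) hC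

end BiasedWalk

open BiasedWalk

/-- For a `p`-biased random walk with `p > 1/2`,
`P(T ≥ t) ≤ 2√p(√p + √q)(4pq)^{t/2}` for every `t : ℕ`, where `T` is the last time
the walk visits its bottommost point and `q = 1-p`. -/
theorem biased_walk_tail_last_min' {Ω : Type*} [MeasurableSpace Ω] (μ : Measure Ω)
    [IsProbabilityMeasure μ] (p q : ℝ) (hp : 1 / 2 < p) (hp1 : p ≤ 1) (hq : q = 1 - p)
    (Z : ℕ → Ω → ℤ) (hmeas : ∀ i, Measurable (Z i))
    (hindep : iIndepFun Z μ)
    (hup : ∀ i, μ {ω | Z i ω = 1} = ENNReal.ofReal p)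
    (hdown : ∀ i, μ {ω | Z i ω = -1} = ENNReal.ofReal q)
    (S : Ω → ℕ → ℤ) (hS : ∀ ω t, S ω t = ∑ i ∈ Finset.range t, Z i ω)
    (B : Ω → ℤ) (hB : ∀ ω, B ω = sInf (Set.range (S ω)))
    (T : Ω → ℕ) (hT : ∀ ω, T ω = sSup {t : ℕ | S ω t = B ω}) (t : ℕ) :
    μ {ω | t ≤ T ω} ≤ ENNReal.ofReal
      (2 * Real.sqrt p * (Real.sqrt p + Real.sqrt q) * (4 * p * q) ^ ((t : ℝ) / 2)) := by
  have hq0 : 0 ≤ q := by linarith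
  have hqp : q ≤ p := by linarith
  have hpq : p + q = 1 := by linarith
  have hsub : {ω | t ≤ T ω} ⊆ ⋃ R, {ω | DropsWithin t R (Z · ω)} := fun ω (hω : t ≤ T ω) => by
    rw [hT, hB, show S ω = walk (Z · ω) from funext (hS ω)] at hω
    obtain ⟨s, hts, hs⟩ := exists_ge_forall_le_of_le_sSup hω
    refine Set.mem_iUnion.mpr ⟨s - t, s - t, le_rfl, ?_⟩
    rw [Nat.add_sub_cancel' hts]
    exact le_min (by simpa [walk] using hs 0 (Nat.zero_le t)) (hs t le_rfl)
  calc μ {ω | t ≤ T ω} ≤ μ (⋃ R, {ω | DropsWithin t R (Z · ω)}) := measure_mono hsub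
    _ = ⨆ R, μ {ω | DropsWithin t R (Z · ω)} :=
        Monotone.measure_iUnion fun R R' hR ω => dropsWithin_mono hR
    _ ≤ ENNReal.ofReal ((2 * √(p * q)) ^ t) := iSup_le fun R =>
        (measure_le_pathProb hup hdown hmeas hindep (hq0.trans hqp) hq0 hpq
          fun _ _ h => dropsWithin_congr h).trans
        (ENNReal.ofReal_le_ofReal (pathProb_dropsWithin_le hq0 hqp hpq t R))
    _ ≤ _ := ENNReal.ofReal_le_ofReal (two_sqrt_mul_pow_le hp hq0 t)
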